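/- Let C be an R-divergence (monotone under superchannels that keep both arguments in the restricted class R of channels), and define its minimal extension C_min(M||N) := sup over superchannels Θ with Θ[M], Θ[N] ∈ R of C(Θ[M]||Θ[N]), and maximal extension C_max(M||N) := inf of C(E||F) over E, F ∈ R for which some superchannel Θ satisfies Θ[E] = M, Θ[F] = N. Then: (a) both C_min and C_max satisfy the data processing inequality under all superchannels; (b) both reduce to C on pairs in R; (c) any channel divergence D reducing to C on R satisfies C_min(M||N) ≤ D(M||N) ≤ C_max(M||N) for all channels M, N. -/

import Mathlib

open scoped BigOperators ComplexOrder Matrix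

abbrev Mat (ι : Type) := Matrix ι ι ℂ
abbrev QMap (ι κ : Type) := Mat ι →ₗ[ℂ] Mat κ

noncomputable def choi {ι κ : Type} [Fintype ι] [DecidableEq ι] (N : QMap ι κ) :
    Matrix (ι × κ) (ι × κ) ℂ :=
  Matrix.of fun p q => N (Matrix.single p.1 q.1 1) p.2 q.2

def IsCP {ι κ : Type} [Fintype ι] [DecidableEq ι] [Fintype κ] (N : QMap ι κ) : Prop :=
  (choi N).PosSemidef

def IsTP {ι κ : Type} [Fintype ι] [Fintype κ] (N : QMap ι κ) : Prop :=
  ∀ ρ : Mat ι, (N ρ).trace = ρ.trace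

def IsCPTP {ι κ : Type} [Fintype ι] [DecidableEq ι] [Fintype κ] (N : QMap ι κ) : Prop :=
  IsCP N ∧ IsTP N

noncomputable def tensMap {ι1 κ1 ι2 κ2 : Type} [Fintype ι1] [DecidableEq ι1]
    [Fintype ι2] [DecidableEq ι2]
    (M : QMap ι1 κ1) (N : QMap ι2 κ2) : QMap (ι1 × ι2) (κ1 × κ2) where
  toFun X := Matrix.of fun p q =>
    ∑ i : ι1, ∑ i' : ι1, ∑ j : ι2, ∑ j' : ι2,
      X (i, j) (i', j') *
        (M (Matrix.single i i' 1) p.1 q.1 * N (Matrix.single j j' 1) p.2 q.2)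
  map_add' X Y := by
    ext p q
    simp [Matrix.add_apply, add_mul, Finset.sum_add_distrib]
  map_smul' c X := by
    ext p q
    simp [Matrix.smul_apply, Finset.mul_sum, smul_eq_mul, mul_assoc]

noncomputable def reindexQ {ι κ : Type} {m k : ℕ} (e : ι ≃ Fin m) (f : κ ≃ Fin k)
    (N : QMap ι κ) : QMap (Fin m) (Fin k) where
  toFun X := (N (X.submatrix e e)).submatrix f.symm f.symm
  map_add' X Y := by
    simp [Matrix.submatrix_add, map_add]
  map_smul' c X := by
    simp [Matrix.submatrix_smul, map_smul]

noncomputable def tensChan {a1 b1 a2 b2 : ℕ}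
    (M : QMap (Fin a1) (Fin b1)) (N : QMap (Fin a2) (Fin b2)) :
    QMap (Fin (a1 * a2)) (Fin (b1 * b2)) :=
  reindexQ finProdFinEquiv finProdFinEquiv (tensMap M N)

noncomputable def superApply {a b a' b' r : ℕ}
    (E : QMap (Fin a') (Fin a × Fin r)) (F : QMap (Fin b × Fin r) (Fin b'))
    (N : QMap (Fin a) (Fin b)) : QMap (Fin a') (Fin b') :=
  F ∘ₗ tensMap N (LinearMap.id : QMap (Fin r) (Fin r)) ∘ₗ E

noncomputable def replacement {ι κ : Type} [Fintype ι] (σ : Mat κ) : QMap ι κ where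
  toFun ω := ω.trace • σ
  map_add' x y := by simp [Matrix.trace_add, add_smul]
  map_smul' c x := by simp [Matrix.trace_smul, smul_smul]

def IsDensity {κ : Type} [Fintype κ] (σ : Mat κ) : Prop :=
  σ.PosSemidef ∧ σ.trace = 1

/-- The minimal channel extension of an `R`-divergence `C`. -/
noncomputable def Cmin (R : ∀ a b : ℕ, QMap (Fin a) (Fin b) → Prop)
    (C : ∀ a b : ℕ, QMap (Fin a) (Fin b) → QMap (Fin a) (Fin b) → EReal)
    (a b : ℕ) (M N : QMap (Fin a) (Fin b)) : EReal :=
  sSup {v : EReal | ∃ (a' b' r : ℕ) (E : QMap (Fin a') (Fin a × Fin r))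
      (F : QMap (Fin b × Fin r) (Fin b')),
    IsCPTP E ∧ IsCPTP F ∧ R a' b' (superApply E F M) ∧ R a' b' (superApply E F N) ∧
    v = C a' b' (superApply E F M) (superApply E F N)}

/-- The maximal channel extension of an `R`-divergence `C`. -/
noncomputable def Cmax (R : ∀ a b : ℕ, QMap (Fin a) (Fin b) → Prop)
    (C : ∀ a b : ℕ, QMap (Fin a) (Fin b) → QMap (Fin a) (Fin b) → EReal)
    (a b : ℕ) (M N : QMap (Fin a) (Fin b)) : EReal :=
  sInf {v : EReal | ∃ (a' b' r : ℕ) (Ech Fch : QMap (Fin a') (Fin b'))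
      (E : QMap (Fin a) (Fin a' × Fin r)) (F : QMap (Fin b' × Fin r) (Fin b)),
    R a' b' Ech ∧ R a' b' Fch ∧ IsCPTP E ∧ IsCPTP F ∧
    superApply E F Ech = M ∧ superApply E F Fch = N ∧ v = C a' b' Ech Fch}

/-!
`Cmin` is a supremum over the superchannels that map the pair into `R`, and `Cmax` an infimum over
the pairs in `R` that a superchannel maps onto the given one. Since superchannels compose, applying
a superchannel shrinks the first set and enlarges the second, which is data processing. The
identity superchannel puts `C M N` into both sets, and data processing of `C` bounds all their other
elements by it. A channel divergence agreeing with `C` on `R` bounds, by its own data processing,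
every element of the first set from above and every element of the second from below.

Composition of superchannels needs CPTP maps to be closed under composition and under tensoring
with the identity. This goes through Kraus representations: the Choi matrix of `X ↦ ∑ Kₜ X Kₜᴴ` is
`∑ vₜ vₜᴴ` with `vₜ` the entries of `Kₜ`, and every positive semidefinite matrix has this form.
-/

open Matrix
open scoped Kronecker

section Tensor

variable {ι κ ι₁ κ₁ ι₂ κ₂ : Type}

theorem linearMap_ext_single [Fintype ι] [DecidableEq ι] {M : Type} [AddCommMonoid M]
    [Module ℂ M] {f g : Mat ι →ₗ[ℂ] M}
    (h : ∀ i j, f (single i j 1) = g (single i j 1)) : f = g :=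
  (stdBasis ℂ ι ι).ext fun ⟨i, j⟩ => by simpa only [stdBasis_eq_single] using h i j

theorem qmap_apply_eq_sum_single [Fintype ι] [DecidableEq ι] (N : QMap ι κ) (X : Mat ι)
    (p q : κ) : N X p q = ∑ i, ∑ j, X i j * N (single i j 1) p q := by
  conv_lhs => rw [matrix_eq_sum_single X]
  simp only [map_sum, Matrix.sum_apply]
  refine Finset.sum_congr rfl fun i _ => Finset.sum_congr rfl fun j _ => ?_
  rw [← smul_eq_mul, ← Matrix.smul_apply, ← map_smul, smul_single, smul_eq_mul, mul_one]

theorem single_prod_eq_kronecker [DecidableEq ι₁] [DecidableEq ι₂] (i i' : ι₁) (j j' : ι₂) :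
    single (i, j) (i', j') (1 : ℂ) = single i i' 1 ⊗ₖ single j j' 1 := by
  ext ⟨a, b⟩ ⟨c, d⟩
  simp only [single_apply, kroneckerMap_apply, Prod.mk.injEq]
  aesop

theorem sum_kronecker_sum {α T S l m n p : Type} [NonUnitalNonAssocSemiring α] (s : Finset T)
    (t : Finset S) (A : T → Matrix l m α) (B : S → Matrix n p α) :
    (∑ i ∈ s, A i) ⊗ₖ (∑ j ∈ t, B j) = ∑ i ∈ s, ∑ j ∈ t, A i ⊗ₖ B j := by
  ext ⟨a, b⟩ ⟨c, d⟩
  simp only [kroneckerMap_apply, Matrix.sum_apply, Finset.sum_mul_sum]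

theorem tensMap_kronecker [Fintype ι₁] [DecidableEq ι₁] [Fintype ι₂] [DecidableEq ι₂]
    (M : QMap ι₁ κ₁) (N : QMap ι₂ κ₂) (A : Mat ι₁) (B : Mat ι₂) :
    tensMap M N (A ⊗ₖ B) = M A ⊗ₖ N B := by
  ext ⟨p₁, p₂⟩ ⟨q₁, q₂⟩
  rw [kroneckerMap_apply, qmap_apply_eq_sum_single M, qmap_apply_eq_sum_single N]
  simp only [Finset.sum_mul_sum]
  show ∑ i, ∑ i', ∑ j, ∑ j', _ = _
  refine Finset.sum_congr rfl fun i _ => ?_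
  rw [Finset.sum_comm]
  refine Finset.sum_congr rfl fun j _ => Finset.sum_congr rfl fun i' _ =>
    Finset.sum_congr rfl fun j' _ => ?_
  rw [kroneckerMap_apply, mul_mul_mul_comm]

theorem tensMap_comp {μ₁ μ₂ : Type} [Fintype ι₁] [DecidableEq ι₁] [Fintype ι₂]
    [DecidableEq ι₂] [Fintype κ₁] [DecidableEq κ₁] [Fintype κ₂] [DecidableEq κ₂]
    (M₂ : QMap κ₁ μ₁) (M₁ : QMap ι₁ κ₁) (N₂ : QMap κ₂ μ₂) (N₁ : QMap ι₂ κ₂) :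
    tensMap (M₂ ∘ₗ M₁) (N₂ ∘ₗ N₁) = tensMap M₂ N₂ ∘ₗ tensMap M₁ N₁ :=
  linearMap_ext_single fun ⟨i, j⟩ ⟨i', j'⟩ => by
    simp only [LinearMap.comp_apply, single_prod_eq_kronecker, tensMap_kronecker]

end Tensor

section Relabel

variable {ι κ : Type}

noncomputable def relabel (e : ι ≃ κ) : QMap ι κ :=
  (reindexLinearEquiv ℂ ℂ e e).toLinearMap

theorem relabel_apply (e : ι ≃ κ) (X : Mat ι) : relabel e X = X.submatrix e.symm e.symm := rfl

theorem relabel_single [DecidableEq ι] [DecidableEq κ] (e : ι ≃ κ) (i j : ι) (c : ℂ) :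
    relabel e (single i j c) = single (e i) (e j) c := by
  rw [relabel_apply, submatrix_single_equiv, Equiv.symm_symm]

theorem relabel_symm_relabel (e : ι ≃ κ) (X : Mat ι) : relabel e.symm (relabel e X) = X := by
  ext i j
  simp [relabel_apply]

end Relabel

section Kraus

variable {ι κ μ ι₁ κ₁ ι₂ κ₂ : Type}

noncomputable def krausMap [Fintype ι] {T : Type} [Fintype T] (K : T → Matrix κ ι ℂ) :
    QMap ι κ where
  toFun X := ∑ t, K t * X * (K t)ᴴ
  map_add' X Y := by simp only [Matrix.mul_add, Matrix.add_mul, Finset.sum_add_distrib]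
  map_smul' c X := by
    simp only [Matrix.mul_smul, Matrix.smul_mul, Finset.smul_sum, RingHom.id_apply]

theorem krausMap_apply [Fintype ι] {T : Type} [Fintype T] (K : T → Matrix κ ι ℂ) (X : Mat ι) :
    krausMap K X = ∑ t, K t * X * (K t)ᴴ := rfl

theorem choi_injective [Fintype ι] [DecidableEq ι] :
    Function.Injective (choi : QMap ι κ → Matrix (ι × κ) (ι × κ) ℂ) := fun M N h =>
  linearMap_ext_single fun i j => by
    ext p q
    exact congrFun (congrFun h (i, p)) (j, q)

theorem choi_krausMap [Fintype ι] [DecidableEq ι] {T : Type} [Fintype T]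
    (K : T → Matrix κ ι ℂ) :
    choi (krausMap K) =
      ∑ t, vecMulVec (fun x : ι × κ => K t x.2 x.1) (star fun x => K t x.2 x.1) := by
  ext ⟨i, p⟩ ⟨j, q⟩
  simp [choi, krausMap_apply, Matrix.sum_apply, vecMulVec_apply, Matrix.mul_apply, single_apply,
    ite_and, Finset.sum_ite_eq, ite_mul]

theorem isCP_krausMap [Fintype ι] [DecidableEq ι] [Fintype κ] {T : Type} [Fintype T]
    (K : T → Matrix κ ι ℂ) : IsCP (krausMap K) := by
  rw [IsCP, choi_krausMap]
  exact posSemidef_sum _ fun t _ => posSemidef_vecMulVec_self_star _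

theorem IsCP.exists_krausMap [Fintype ι] [DecidableEq ι] [Fintype κ] {N : QMap ι κ}
    (hN : IsCP N) : ∃ (m : ℕ) (K : Fin m → Matrix κ ι ℂ), N = krausMap K := by
  obtain ⟨m, v, hv⟩ := posSemidef_iff_eq_sum_vecMulVec.1 hN
  refine ⟨m, fun t => of fun p i => v t (i, p), choi_injective ?_⟩
  rw [hv, choi_krausMap]
  rfl

theorem krausMap_comp [Fintype ι] [Fintype κ] {T S : Type} [Fintype T] [Fintype S]
    (K : T → Matrix μ κ ℂ) (L : S → Matrix κ ι ℂ) :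
    krausMap K ∘ₗ krausMap L = krausMap fun p : T × S => K p.1 * L p.2 := by
  ext X : 1
  simp only [LinearMap.comp_apply, krausMap_apply, Fintype.sum_prod_type, Matrix.mul_sum,
    Matrix.sum_mul, conjTranspose_mul, Matrix.mul_assoc]

theorem tensMap_krausMap [Fintype ι₁] [DecidableEq ι₁] [Fintype ι₂] [DecidableEq ι₂]
    {T S : Type} [Fintype T] [Fintype S] (K : T → Matrix κ₁ ι₁ ℂ) (L : S → Matrix κ₂ ι₂ ℂ) :
    tensMap (krausMap K) (krausMap L) = krausMap fun p : T × S => K p.1 ⊗ₖ L p.2 :=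
  linearMap_ext_single fun ⟨i, j⟩ ⟨i', j'⟩ => by
    simp only [single_prod_eq_kronecker, tensMap_kronecker, krausMap_apply,
      Fintype.sum_prod_type, sum_kronecker_sum, conjTranspose_kronecker, ← mul_kronecker_mul]

theorem relabel_eq_krausMap [Fintype ι] [DecidableEq ι] [Fintype κ] (e : ι ≃ κ) :
    relabel e = krausMap fun _ : Unit => (e.symm.toPEquiv.toMatrix : Matrix κ ι ℂ) := by
  classical
  have hP : (e.symm.toPEquiv.toMatrix : Matrix κ ι ℂ)ᴴ = e.toPEquiv.toMatrix := by
    ext i p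
    by_cases h : p = e i <;> simp [PEquiv.toMatrix_apply, h, Equiv.eq_symm_apply, eq_comm]
  ext X : 1
  rw [krausMap_apply, Fintype.sum_unique, hP, PEquiv.toMatrix_toPEquiv_mul,
    PEquiv.mul_toMatrix_toPEquiv, relabel_apply]
  rfl

theorem id_eq_krausMap [Fintype ι] [DecidableEq ι] :
    (LinearMap.id : QMap ι ι) = krausMap fun _ : Unit => (1 : Mat ι) := by
  ext X : 1
  simp [krausMap_apply]

end Kraus

section Closure

variable {ι κ μ ι₁ κ₁ ι₂ κ₂ : Type}

theorem IsCP.comp [Fintype ι] [DecidableEq ι] [Fintype κ] [DecidableEq κ] [Fintype μ]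
    {F : QMap κ μ} {G : QMap ι κ} (hF : IsCP F) (hG : IsCP G) : IsCP (F ∘ₗ G) := by
  obtain ⟨_, K, rfl⟩ := hF.exists_krausMap
  obtain ⟨_, L, rfl⟩ := hG.exists_krausMap
  rw [krausMap_comp]
  exact isCP_krausMap _

theorem IsCP.tensMap [Fintype ι₁] [DecidableEq ι₁] [Fintype ι₂] [DecidableEq ι₂]
    [Fintype κ₁] [Fintype κ₂] {M : QMap ι₁ κ₁} {N : QMap ι₂ κ₂} (hM : IsCP M) (hN : IsCP N) :
    IsCP (_root_.tensMap M N) := by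
  obtain ⟨_, K, rfl⟩ := hM.exists_krausMap
  obtain ⟨_, L, rfl⟩ := hN.exists_krausMap
  rw [tensMap_krausMap]
  exact isCP_krausMap _

theorem isCP_relabel [Fintype ι] [DecidableEq ι] [Fintype κ] (e : ι ≃ κ) : IsCP (relabel e) :=
  relabel_eq_krausMap e ▸ isCP_krausMap _

theorem isCP_id [Fintype ι] [DecidableEq ι] : IsCP (LinearMap.id : QMap ι ι) :=
  id_eq_krausMap (ι := ι) ▸ isCP_krausMap _

theorem IsTP.comp [Fintype ι] [Fintype κ] [Fintype μ] {F : QMap κ μ} {G : QMap ι κ}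
    (hF : IsTP F) (hG : IsTP G) : IsTP (F ∘ₗ G) := fun ρ => by
  rw [LinearMap.comp_apply, hF, hG]

theorem IsTP.tensMap [Fintype ι₁] [DecidableEq ι₁] [Fintype ι₂] [DecidableEq ι₂]
    [Fintype κ₁] [Fintype κ₂] {M : QMap ι₁ κ₁} {N : QMap ι₂ κ₂} (hM : IsTP M) (hN : IsTP N) :
    IsTP (_root_.tensMap M N) := by
  have htrace : traceLinearMap (κ₁ × κ₂) ℂ ℂ ∘ₗ _root_.tensMap M N =
      traceLinearMap (ι₁ × ι₂) ℂ ℂ :=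
    linearMap_ext_single fun ⟨i, j⟩ ⟨i', j'⟩ => by
      simp only [LinearMap.comp_apply, single_prod_eq_kronecker, tensMap_kronecker,
        traceLinearMap_apply, trace_kronecker, hM _, hN _]
  exact LinearMap.congr_fun htrace

theorem isTP_relabel [Fintype ι] [Fintype κ] (e : ι ≃ κ) : IsTP (relabel e) := fun ρ =>
  e.symm.sum_comp fun i => ρ i i

theorem IsCPTP.comp [Fintype ι] [DecidableEq ι] [Fintype κ] [DecidableEq κ] [Fintype μ]
    {F : QMap κ μ} {G : QMap ι κ} (hF : IsCPTP F) (hG : IsCPTP G) : IsCPTP (F ∘ₗ G) :=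
  ⟨hF.1.comp hG.1, hF.2.comp hG.2⟩

theorem IsCPTP.tensMap [Fintype ι₁] [DecidableEq ι₁] [Fintype ι₂] [DecidableEq ι₂]
    [Fintype κ₁] [Fintype κ₂] {M : QMap ι₁ κ₁} {N : QMap ι₂ κ₂} (hM : IsCPTP M)
    (hN : IsCPTP N) : IsCPTP (_root_.tensMap M N) :=
  ⟨hM.1.tensMap hN.1, hM.2.tensMap hN.2⟩

theorem isCPTP_relabel [Fintype ι] [DecidableEq ι] [Fintype κ] (e : ι ≃ κ) :
    IsCPTP (relabel e) :=
  ⟨isCP_relabel e, isTP_relabel e⟩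

theorem isCPTP_id [Fintype ι] [DecidableEq ι] : IsCPTP (LinearMap.id : QMap ι ι) :=
  ⟨isCP_id, fun _ => rfl⟩

end Closure

section Superchannel

def prodFinAssoc (n r r' : ℕ) : (Fin n × Fin r) × Fin r' ≃ Fin n × Fin (r * r') :=
  (Equiv.prodAssoc _ _ _).trans ((Equiv.refl _).prodCongr finProdFinEquiv)

theorem relabel_prodFinAssoc_kronecker {n r r' : ℕ} (X : Mat (Fin n)) (Y : Mat (Fin r))
    (Z : Mat (Fin r')) :
    relabel (prodFinAssoc n r r') ((X ⊗ₖ Y) ⊗ₖ Z) = X ⊗ₖ relabel finProdFinEquiv (Y ⊗ₖ Z) := by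
  ext ⟨p, w⟩ ⟨q, w'⟩
  simp [relabel_apply, prodFinAssoc, mul_assoc]

theorem tensMap_id_comp_relabel_prodFinAssoc {a b : ℕ} (r r' : ℕ) (N : QMap (Fin a) (Fin b)) :
    tensMap N LinearMap.id ∘ₗ relabel (prodFinAssoc a r r') =
      relabel (prodFinAssoc b r r') ∘ₗ tensMap (tensMap N LinearMap.id) LinearMap.id :=
  linearMap_ext_single fun ⟨⟨i, u⟩, v⟩ ⟨⟨i', u'⟩, v'⟩ => by
    simp only [LinearMap.comp_apply, single_prod_eq_kronecker, tensMap_kronecker,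
      LinearMap.id_apply, relabel_prodFinAssoc_kronecker]

theorem superApply_relabel_prodUnique {a b : ℕ} (M : QMap (Fin a) (Fin b)) :
    superApply (relabel (Equiv.prodUnique (Fin a) (Fin 1)).symm)
      (relabel (Equiv.prodUnique (Fin b) (Fin 1))) M = M :=
  linearMap_ext_single fun i j => by
    simp only [superApply, LinearMap.comp_apply, relabel_single, Equiv.prodUnique_symm_apply,
      single_prod_eq_kronecker, tensMap_kronecker, LinearMap.id_apply]
    ext p q
    simp [relabel_apply]

theorem exists_superApply_eq_self (a b : ℕ) :
    ∃ (r : ℕ) (E : QMap (Fin a) (Fin a × Fin r)) (F : QMap (Fin b × Fin r) (Fin b)),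
      IsCPTP E ∧ IsCPTP F ∧ ∀ M, superApply E F M = M :=
  ⟨1, _, _, isCPTP_relabel _, isCPTP_relabel _, superApply_relabel_prodUnique⟩

theorem exists_superApply_superApply {a b a' b' a'' b'' r r' : ℕ}
    {E : QMap (Fin a') (Fin a × Fin r)} {F : QMap (Fin b × Fin r) (Fin b')}
    {E' : QMap (Fin a'') (Fin a' × Fin r')} {F' : QMap (Fin b' × Fin r') (Fin b'')}
    (hE : IsCPTP E) (hF : IsCPTP F) (hE' : IsCPTP E') (hF' : IsCPTP F') :
    ∃ (r'' : ℕ) (E'' : QMap (Fin a'') (Fin a × Fin r'')) (F'' : QMap (Fin b × Fin r'') (Fin b'')),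
      IsCPTP E'' ∧ IsCPTP F'' ∧
        ∀ N, superApply E' F' (superApply E F N) = superApply E'' F'' N := by
  refine ⟨r * r', relabel (prodFinAssoc a r r') ∘ₗ tensMap E LinearMap.id ∘ₗ E',
    F' ∘ₗ tensMap F LinearMap.id ∘ₗ relabel (prodFinAssoc b r r').symm,
    (isCPTP_relabel _).comp ((hE.tensMap isCPTP_id).comp hE'),
    hF'.comp ((hF.tensMap isCPTP_id).comp (isCPTP_relabel _)), fun N => ?_⟩
  have hcomp : tensMap (F ∘ₗ tensMap N LinearMap.id ∘ₗ E) (LinearMap.id : QMap (Fin r') _) =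
      tensMap F LinearMap.id ∘ₗ tensMap (tensMap N LinearMap.id) LinearMap.id ∘ₗ
        tensMap E LinearMap.id := by
    simp only [← tensMap_comp, LinearMap.id_comp]
  have hassoc := LinearMap.congr_fun (tensMap_id_comp_relabel_prodFinAssoc r r' N)
  ext X : 1
  simp only [LinearMap.comp_apply] at hassoc
  simp only [superApply, hcomp, LinearMap.comp_apply, hassoc, relabel_symm_relabel]

end Superchannel

def DataProcessingOn (R : ∀ a b : ℕ, QMap (Fin a) (Fin b) → Prop)
    (C : ∀ a b : ℕ, QMap (Fin a) (Fin b) → QMap (Fin a) (Fin b) → EReal) : Prop :=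
  ∀ (a b a' b' r : ℕ) (M N : QMap (Fin a) (Fin b))
    (E : QMap (Fin a') (Fin a × Fin r)) (F : QMap (Fin b × Fin r) (Fin b')),
    R a b M → R a b N → IsCPTP E → IsCPTP F →
    R a' b' (superApply E F M) → R a' b' (superApply E F N) →
    C a' b' (superApply E F M) (superApply E F N) ≤ C a b M N

def DataProcessing (D : ∀ a b : ℕ, QMap (Fin a) (Fin b) → QMap (Fin a) (Fin b) → EReal) :
    Prop :=
  ∀ (a b a' b' r : ℕ) (M N : QMap (Fin a) (Fin b))
    (E : QMap (Fin a') (Fin a × Fin r)) (F : QMap (Fin b × Fin r) (Fin b')),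
    IsCPTP M → IsCPTP N → IsCPTP E → IsCPTP F →
    D a' b' (superApply E F M) (superApply E F N) ≤ D a b M N

section Extensions

variable {R : ∀ a b : ℕ, QMap (Fin a) (Fin b) → Prop}
  {C D : ∀ a b : ℕ, QMap (Fin a) (Fin b) → QMap (Fin a) (Fin b) → EReal}
  {a b a' b' r : ℕ} {M N : QMap (Fin a) (Fin b)}

theorem Cmin_superApply_le {E : QMap (Fin a') (Fin a × Fin r)} {F : QMap (Fin b × Fin r) (Fin b')}
    (hE : IsCPTP E) (hF : IsCPTP F) :
    Cmin R C a' b' (superApply E F M) (superApply E F N) ≤ Cmin R C a b M N := by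
  refine sSup_le_sSup ?_
  rintro v ⟨a'', b'', r', E', F', hE', hF', hRM, hRN, rfl⟩
  obtain ⟨r'', E'', F'', hE'', hF'', hcomp⟩ := exists_superApply_superApply hE hF hE' hF'
  exact ⟨a'', b'', r'', E'', F'', hE'', hF'', hcomp M ▸ hRM, hcomp N ▸ hRN, by rw [hcomp, hcomp]⟩

theorem Cmax_superApply_le {E : QMap (Fin a') (Fin a × Fin r)} {F : QMap (Fin b × Fin r) (Fin b')}
    (hE : IsCPTP E) (hF : IsCPTP F) :
    Cmax R C a' b' (superApply E F M) (superApply E F N) ≤ Cmax R C a b M N := by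
  refine sInf_le_sInf ?_
  rintro v ⟨a'', b'', r', M', N', E', F', hRM', hRN', hE', hF', rfl, rfl, rfl⟩
  obtain ⟨r'', E'', F'', hE'', hF'', hcomp⟩ := exists_superApply_superApply hE' hF' hE hF
  exact ⟨a'', b'', r'', M', N', E'', F'', hRM', hRN', hE'', hF'', (hcomp M').symm,
    (hcomp N').symm, rfl⟩

theorem Cmin_eq_of_mem (hC : DataProcessingOn R C) (hM : R a b M) (hN : R a b N) :
    Cmin R C a b M N = C a b M N := by
  refine le_antisymm (sSup_le ?_) (le_sSup ?_)
  · rintro v ⟨a', b', r, E, F, hE, hF, hRM, hRN, rfl⟩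
    exact hC a b a' b' r M N E F hM hN hE hF hRM hRN
  · obtain ⟨r, E, F, hE, hF, hid⟩ := exists_superApply_eq_self a b
    exact ⟨a, b, r, E, F, hE, hF, (hid M).symm ▸ hM, (hid N).symm ▸ hN, by rw [hid, hid]⟩

theorem Cmax_eq_of_mem (hC : DataProcessingOn R C) (hM : R a b M) (hN : R a b N) :
    Cmax R C a b M N = C a b M N := by
  refine le_antisymm (sInf_le ?_) (le_sInf ?_)
  · obtain ⟨r, E, F, hE, hF, hid⟩ := exists_superApply_eq_self a b
    exact ⟨a, b, r, M, N, E, F, hM, hN, hE, hF, hid M, hid N, rfl⟩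
  · rintro v ⟨a', b', r, M', N', E, F, hRM', hRN', hE, hF, rfl, rfl, rfl⟩
    exact hC a' b' a b r M' N' E F hRM' hRN' hE hF hM hN

theorem Cmin_le_of_dataProcessing (hD : DataProcessing D)
    (hDC : ∀ a b M N, R a b M → R a b N → D a b M N = C a b M N)
    (hM : IsCPTP M) (hN : IsCPTP N) : Cmin R C a b M N ≤ D a b M N := by
  refine sSup_le ?_
  rintro v ⟨a', b', r, E, F, hE, hF, hRM, hRN, rfl⟩
  rw [← hDC a' b' _ _ hRM hRN]
  exact hD a b a' b' r M N E F hM hN hE hF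

theorem le_Cmax_of_dataProcessing (hR : ∀ a b N, R a b N → IsCPTP N) (hD : DataProcessing D)
    (hDC : ∀ a b M N, R a b M → R a b N → D a b M N = C a b M N) :
    D a b M N ≤ Cmax R C a b M N := by
  refine le_sInf ?_
  rintro v ⟨a', b', r, M', N', E, F, hRM', hRN', hE, hF, rfl, rfl, rfl⟩
  rw [← hDC a' b' M' N' hRM' hRN']
  exact hD a' b' a b r M' N' E F (hR _ _ _ hRM') (hR _ _ _ hRN') hE hF

end Extensions

theorem stmt17_general
    (R : ∀ a b : ℕ, QMap (Fin a) (Fin b) → Prop)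
    (hR : ∀ a b N, R a b N → IsCPTP N)
    (C : ∀ a b : ℕ, QMap (Fin a) (Fin b) → QMap (Fin a) (Fin b) → EReal)
    (hCmono : ∀ (a b a' b' r : ℕ) (M N : QMap (Fin a) (Fin b))
        (E : QMap (Fin a') (Fin a × Fin r)) (F : QMap (Fin b × Fin r) (Fin b')),
      R a b M → R a b N → IsCPTP E → IsCPTP F →
      R a' b' (superApply E F M) → R a' b' (superApply E F N) →
      C a' b' (superApply E F M) (superApply E F N) ≤ C a b M N) :
    (∀ (a b a' b' r : ℕ) (M N : QMap (Fin a) (Fin b))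
        (E : QMap (Fin a') (Fin a × Fin r)) (F : QMap (Fin b × Fin r) (Fin b')),
      IsCPTP M → IsCPTP N → IsCPTP E → IsCPTP F →
      Cmin R C a' b' (superApply E F M) (superApply E F N) ≤ Cmin R C a b M N ∧
      Cmax R C a' b' (superApply E F M) (superApply E F N) ≤ Cmax R C a b M N) ∧
    (∀ (a b : ℕ) (M N : QMap (Fin a) (Fin b)), R a b M → R a b N →
      Cmin R C a b M N = C a b M N ∧ Cmax R C a b M N = C a b M N) ∧
    (∀ D : ∀ a b : ℕ, QMap (Fin a) (Fin b) → QMap (Fin a) (Fin b) → EReal,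
      (∀ (a b a' b' r : ℕ) (M N : QMap (Fin a) (Fin b))
          (E : QMap (Fin a') (Fin a × Fin r)) (F : QMap (Fin b × Fin r) (Fin b')),
        IsCPTP M → IsCPTP N → IsCPTP E → IsCPTP F →
        D a' b' (superApply E F M) (superApply E F N) ≤ D a b M N) →
      (∀ a b M N, R a b M → R a b N → D a b M N = C a b M N) →
      ∀ (a b : ℕ) (M N : QMap (Fin a) (Fin b)), IsCPTP M → IsCPTP N →
        Cmin R C a b M N ≤ D a b M N ∧ D a b M N ≤ Cmax R C a b M N) :=
  ⟨fun _ _ _ _ _ _ _ _ _ _ _ hE hF => ⟨Cmin_superApply_le hE hF, Cmax_superApply_le hE hF⟩,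
    fun _ _ _ _ hM hN => ⟨Cmin_eq_of_mem hCmono hM hN, Cmax_eq_of_mem hCmono hM hN⟩,
    fun _ hD hDC _ _ _ _ hM hN =>
      ⟨Cmin_le_of_dataProcessing hD hDC hM hN, le_Cmax_of_dataProcessing hR hD hDC⟩⟩

/-- Properties of the optimal extensions of an `R`-divergence:
(a) data processing, (b) reduction to `C` on `R`, (c) optimality. -/
theorem stmt17
    (R : ∀ a b : ℕ, QMap (Fin a) (Fin b) → Prop)
    (hR : ∀ a b N, R a b N → IsCPTP N)
    (C : ∀ a b : ℕ, QMap (Fin a) (Fin b) → QMap (Fin a) (Fin b) → EReal)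
    (hCpos : ∀ a b M N, R a b M → R a b N → 0 ≤ C a b M N)
    (hCmono : ∀ (a b a' b' r : ℕ) (M N : QMap (Fin a) (Fin b))
        (E : QMap (Fin a') (Fin a × Fin r)) (F : QMap (Fin b × Fin r) (Fin b')),
      R a b M → R a b N → IsCPTP E → IsCPTP F →
      R a' b' (superApply E F M) → R a' b' (superApply E F N) →
      C a' b' (superApply E F M) (superApply E F N) ≤ C a b M N) :
    (∀ (a b a' b' r : ℕ) (M N : QMap (Fin a) (Fin b))
        (E : QMap (Fin a') (Fin a × Fin r)) (F : QMap (Fin b × Fin r) (Fin b')),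
      IsCPTP M → IsCPTP N → IsCPTP E → IsCPTP F →
      Cmin R C a' b' (superApply E F M) (superApply E F N) ≤ Cmin R C a b M N ∧
      Cmax R C a' b' (superApply E F M) (superApply E F N) ≤ Cmax R C a b M N) ∧
    (∀ (a b : ℕ) (M N : QMap (Fin a) (Fin b)), R a b M → R a b N →
      Cmin R C a b M N = C a b M N ∧ Cmax R C a b M N = C a b M N) ∧
    (∀ D : ∀ a b : ℕ, QMap (Fin a) (Fin b) → QMap (Fin a) (Fin b) → EReal,
      (∀ (a b a' b' r : ℕ) (M N : QMap (Fin a) (Fin b))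
          (E : QMap (Fin a') (Fin a × Fin r)) (F : QMap (Fin b × Fin r) (Fin b')),
        IsCPTP M → IsCPTP N → IsCPTP E → IsCPTP F →
        D a' b' (superApply E F M) (superApply E F N) ≤ D a b M N) →
      (∀ a b M N, R a b M → R a b N → D a b M N = C a b M N) →
      ∀ (a b : ℕ) (M N : QMap (Fin a) (Fin b)), IsCPTP M → IsCPTP N →
        Cmin R C a b M N ≤ D a b M N ∧ D a b M N ≤ Cmax R C a b M N) :=
  stmt17_general R hR C hCmono
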